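/- Fix λ > 0 and let k ∈ {1, …, K_λ}. Then: (a) σ̂_k² ≤ σ̂_{k−1}² if and only if σ̂_k² ≤ σ̂_ℓ² for all 0 ≤ ℓ ≤ k−1; (b) σ̂_k² ≥ σ̂_{k−1}² if and only if σ̂_ℓ² ≥ σ̂_{k−1}² for all ℓ with k−1 < ℓ ≤ K_λ. -/

import Mathlib

/-!
By the Eckart–Young theorem, and because a best rank-`k` approximation of `PY` stays in the
range of `P`, `‖Y - (PY)_k‖² = ‖Y - PY‖² + ∑_{i > k} d_i²(PY)`. So the numerators `f_k` of
`σ̂_k²` have decrements `f_{k-1} - f_k = d_k²(PY)` that are nonincreasing in `k`. With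
`g_k = nm - λk > 0` one has `g_{k-1} σ̂_{k-1}² = g_k σ̂_k² + d_k²`, i.e. `σ̂_{k-1}²` is a weighted
mean of `σ̂_k²` and `d_k²/λ`. Hence `σ̂_k² ≤ σ̂_{k-1}²` iff `λ σ̂_k² ≤ d_k²`, and
`σ̂_{k-1}² ≤ σ̂_k²` iff `d_k² ≤ λ σ̂_{k-1}²`; since `d_ℓ²` decreases in `ℓ`, the first condition
propagates down to `ℓ = 0` and the second up to `ℓ = K_λ`.
-/

open scoped BigOperators NNReal ENNReal
open Classical MeasureTheory ProbabilityTheory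

noncomputable section

/-- Squared Frobenius (Hilbert–Schmidt) norm of a real matrix. -/
def frob2 {n m : ℕ} (M : Matrix (Fin n) (Fin m) ℝ) : ℝ :=
  ∑ i, ∑ j, (M i j) ^ 2

/-- `sval M k` is the `k`-th largest singular value of `M` (1-based indexing),
i.e. the square root of the `k`-th largest eigenvalue of `Mᴴ * M`; by convention
it is `0` for `k = 0` and for `k > m`. -/
def sval {n m : ℕ} (M : Matrix (Fin n) (Fin m) ℝ) (k : ℕ) : ℝ :=
  if h : 1 ≤ k ∧ k ≤ m then
    Real.sqrt ((show (M.transpose * M).IsHermitian by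
      simpa [Matrix.conjTranspose_eq_transpose_of_trivial] using Matrix.isHermitian_conjTranspose_mul_self M).eigenvalues
      (Tuple.sort (show (M.transpose * M).IsHermitian by
      simpa [Matrix.conjTranspose_eq_transpose_of_trivial] using Matrix.isHermitian_conjTranspose_mul_self M).eigenvalues ⟨m - k, by omega⟩))
  else 0

/-- A best rank-`k` approximation of `M` in Frobenius norm (rank-`k` truncated SVD),
with the convention that the rank-`0` truncation is `0`. -/
def trunc {n m : ℕ} (M : Matrix (Fin n) (Fin m) ℝ) (k : ℕ) :
    Matrix (Fin n) (Fin m) ℝ :=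
  if k = 0 then 0
  else Classical.epsilon fun B : Matrix (Fin n) (Fin m) ℝ =>
    B.rank ≤ k ∧ ∀ C : Matrix (Fin n) (Fin m) ℝ, C.rank ≤ k → frob2 (M - B) ≤ frob2 (M - C)

/-- `K_λ = ⌊(nm-1)/λ⌋ ∧ q ∧ m`. -/
def Kfun (n m q : ℕ) (lam : ℝ) : ℕ :=
  min (min (Nat.floor ((((n * m : ℕ) : ℝ) - 1) / lam)) q) m

/-- `σ̂_k² = ‖Y - (PY)_k‖² / (nm - λ k)`. -/
def sighat2 {n m : ℕ} (Y : Matrix (Fin n) (Fin m) ℝ)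
    (P : Matrix (Fin n) (Fin n) ℝ) (lam : ℝ) (k : ℕ) : ℝ :=
  frob2 (Y - trunc (P * Y) k) / (((n * m : ℕ) : ℝ) - lam * k)

/-- The selected rank `k̂ = ∑_{k=1}^{K_λ} 1{d_k²(PY) ≥ λ σ̂_k²}`,
which minimizes `σ̂_k²` over `{0, 1, …, K_λ}`. -/
def khat {n m : ℕ} (Y : Matrix (Fin n) (Fin m) ℝ)
    (P : Matrix (Fin n) (Fin n) ℝ) (q : ℕ) (lam : ℝ) : ℕ :=
  ∑ k ∈ Finset.Icc 1 (Kfun n m q lam),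
    if lam * sighat2 Y P lam k ≤ (sval (P * Y) k) ^ 2 then 1 else 0

open Matrix

section Frobenius

variable {n m : ℕ}

lemma frob2_eq_trace (M : Matrix (Fin n) (Fin m) ℝ) : frob2 M = trace (Mᴴ * M) := by
  rw [frob2, trace, Finset.sum_comm]
  simp [mul_apply, pow_two]

lemma frob2_nonneg (M : Matrix (Fin n) (Fin m) ℝ) : 0 ≤ frob2 M :=
  Finset.sum_nonneg fun _ _ => Finset.sum_nonneg fun _ _ => sq_nonneg _

lemma eq_zero_of_frob2_eq_zero {M : Matrix (Fin n) (Fin m) ℝ} (h : frob2 M = 0) : M = 0 := by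
  ext i j
  have hrow := (Finset.sum_eq_zero_iff_of_nonneg fun i _ =>
    Finset.sum_nonneg fun j _ => sq_nonneg (M i j)).1 h i (Finset.mem_univ i)
  have hij := (Finset.sum_eq_zero_iff_of_nonneg fun j _ => sq_nonneg (M i j)).1 hrow j
    (Finset.mem_univ j)
  simpa using hij

lemma frob2_add (A B : Matrix (Fin n) (Fin m) ℝ) :
    frob2 (A + B) = frob2 A + frob2 B + 2 * trace (Aᴴ * B) := by
  have hsymm : trace (Bᴴ * A) = trace (Aᴴ * B) := by
    rw [← trace_transpose, transpose_mul, conjTranspose_eq_transpose_of_trivial,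
      conjTranspose_eq_transpose_of_trivial, transpose_transpose]
  rw [frob2_eq_trace, frob2_eq_trace, frob2_eq_trace, conjTranspose_add, Matrix.add_mul,
    Matrix.mul_add, Matrix.mul_add, trace_add, trace_add, trace_add, hsymm]
  ring

lemma frob2_eq_frob2_mul_add_frob2_sub_mul {P : Matrix (Fin n) (Fin n) ℝ} (hP2 : P * P = P)
    (hPt : Pᵀ = P) (A : Matrix (Fin n) (Fin m) ℝ) :
    frob2 A = frob2 (P * A) + frob2 (A - P * A) := by
  have hcross : trace ((P * A)ᴴ * (A - P * A)) = 0 := by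
    rw [conjTranspose_mul, conjTranspose_eq_transpose_of_trivial P, hPt, Matrix.mul_assoc,
      Matrix.mul_sub, ← Matrix.mul_assoc P P, hP2, sub_self, Matrix.mul_zero, trace_zero]
  have h := frob2_add (P * A) (A - P * A)
  rw [add_sub_cancel, hcross] at h
  linarith

lemma frob2_mul_eq_trace {s : ℕ} (A : Matrix (Fin n) (Fin m) ℝ)
    (W : Matrix (Fin m) (Fin s) ℝ) :
    frob2 (A * W) = trace (Aᴴ * A * (W * Wᴴ)) := by
  rw [frob2_eq_trace, conjTranspose_mul, Matrix.mul_assoc, trace_mul_comm]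
  simp only [Matrix.mul_assoc]

lemma frob2_mul_le_of_conjTranspose_mul_eq_one {s : ℕ} (A : Matrix (Fin n) (Fin m) ℝ)
    {V : Matrix (Fin m) (Fin s) ℝ} (hV : Vᴴ * V = 1) : frob2 (A * V) ≤ frob2 A := by
  have hQ : (1 - V * Vᴴ) * (1 - V * Vᴴ)ᴴ = 1 - V * Vᴴ := by
    simp only [conjTranspose_sub, conjTranspose_one, conjTranspose_mul,
      conjTranspose_conjTranspose, Matrix.mul_sub, Matrix.sub_mul, Matrix.mul_one,
      Matrix.one_mul, Matrix.mul_assoc, ← Matrix.mul_assoc Vᴴ V, hV]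
    abel
  have hsplit : frob2 A = frob2 (A * V) + frob2 (A * (1 - V * Vᴴ)) := by
    rw [frob2_mul_eq_trace, frob2_mul_eq_trace, hQ, ← trace_add, ← Matrix.mul_add,
      add_sub_cancel, Matrix.mul_one, frob2_eq_trace]
  linarith [frob2_nonneg (A * (1 - V * Vᴴ))]

end Frobenius

section OrthonormalColumns

variable {n m : ℕ}

lemma diag_mul_conjTranspose_le_one {s : ℕ} {G : Matrix (Fin m) (Fin s) ℝ} (hG : Gᴴ * G = 1)
    (j : Fin m) : (G * Gᴴ) j j ≤ 1 := by
  set Q := G * Gᴴ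
  have hQQ : Q * Q = Q := by
    rw [Matrix.mul_assoc, ← Matrix.mul_assoc Gᴴ, hG, Matrix.one_mul]
  have hQt : ∀ a b, Q a b = Q b a := fun a b => by
    simp [Q, mul_apply, mul_comm]
  -- `Q j j = ∑ l, Q j l ^ 2 ≥ Q j j ^ 2`, since `Q` is a symmetric idempotent.
  have hsq : Q j j = ∑ l, Q j l ^ 2 := by
    conv_lhs => rw [← hQQ]
    simp only [mul_apply, pow_two]
    exact Finset.sum_congr rfl fun l _ => by rw [hQt l j]
  have hle : Q j j ^ 2 ≤ Q j j := hsq ▸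
    Finset.single_le_sum (f := fun l => Q j l ^ 2) (fun _ _ => sq_nonneg _) (Finset.mem_univ j)
  nlinarith

lemma exists_conjTranspose_mul_eq_one_and_mul_eq_zero (C : Matrix (Fin n) (Fin m) ℝ) {k : ℕ}
    (hC : C.rank ≤ k) :
    ∃ V : Matrix (Fin m) (Fin (m - k)) ℝ, Vᴴ * V = 1 ∧ C * V = 0 := by
  set f : EuclideanSpace ℝ (Fin m) →ₗ[ℝ] (Fin n → ℝ) :=
    C.mulVecLin.comp (WithLp.linearEquiv 2 ℝ (Fin m → ℝ)).toLinearMap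
  have hdim : m - k ≤ Module.finrank ℝ (LinearMap.ker f) := by
    have h := LinearMap.finrank_range_add_finrank_ker f
    rw [finrank_euclideanSpace_fin, LinearMap.range_comp, LinearEquiv.range,
      Submodule.map_top] at h
    have : C.rank = Module.finrank ℝ (LinearMap.range C.mulVecLin) := rfl
    omega
  set b := stdOrthonormalBasis ℝ (LinearMap.ker f)
  set v : Fin (m - k) → EuclideanSpace ℝ (Fin m) := fun i => b (Fin.castLE hdim i)
  refine ⟨Matrix.of fun t i => v i t, ?_, ?_⟩
  · ext i j
    have h := orthonormal_iff_ite.mp b.orthonormal (Fin.castLE hdim i) (Fin.castLE hdim j)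
    have hinner :
        inner ℝ (b (Fin.castLE hdim i)) (b (Fin.castLE hdim j)) = ∑ t, v i t * v j t := by
      rw [Submodule.coe_inner, PiLp.inner_apply]
      simp only [RCLike.inner_apply, conj_trivial]
      exact Finset.sum_congr rfl fun _ _ => mul_comm _ _
    simp only [mul_apply, one_apply, conjTranspose_apply, of_apply, star_trivial]
    rw [← hinner, h]
    simp [(Fin.castLE_injective hdim).eq_iff]
  · ext a i
    have hker : C.mulVec (v i) = 0 := (b (Fin.castLE hdim i)).2
    simpa [mul_apply, mulVec, dotProduct] using congrFun hker a

end OrthonormalColumns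

lemma sum_filter_lt_le_sum_mul_of_monotone {m s : ℕ} (hs : s ≤ m) {μ c : Fin m → ℝ}
    (hμ : Monotone μ) (hμ0 : ∀ i, 0 ≤ μ i) (hc0 : ∀ i, 0 ≤ c i) (hc1 : ∀ i, c i ≤ 1)
    (hsum : ∑ i, c i = s) :
    ∑ i ∈ Finset.univ.filter (fun i : Fin m => (i : ℕ) < s), μ i ≤ ∑ i, μ i * c i := by
  rcases Nat.eq_zero_or_pos s with rfl | hs0
  · simpa using Finset.sum_nonneg fun i _ => mul_nonneg (hμ0 i) (hc0 i)
  set θ := μ ⟨s - 1, by omega⟩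
  set ind : Fin m → ℝ := fun i => if (i : ℕ) < s then 1 else 0
  have hind : ∑ i, ind i = s := by
    simp [ind, Finset.sum_boole, Fin.card_filter_val_lt, hs]
  -- Each term is `≥ 0` because `θ` separates the values of `μ` below and above `s`.
  have hterm : ∀ i, 0 ≤ (μ i - θ) * (c i - ind i) := by
    intro i
    by_cases hi : (i : ℕ) < s
    · simp only [ind, if_pos hi]
      exact mul_nonneg_of_nonpos_of_nonpos (sub_nonpos.2 (hμ (Fin.mk_le_mk.2 (by omega))))
        (sub_nonpos.2 (hc1 i))
    · simp only [ind, if_neg hi, sub_zero]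
      exact mul_nonneg (sub_nonneg.2 (hμ (Fin.mk_le_mk.2 (by omega)))) (hc0 i)
  calc ∑ i ∈ Finset.univ.filter (fun i : Fin m => (i : ℕ) < s), μ i
        = ∑ i, μ i * ind i := by
        simp [ind, Finset.sum_filter]
    _ ≤ ∑ i, μ i * ind i + ∑ i, (μ i - θ) * (c i - ind i) :=
        le_add_of_nonneg_right (Finset.sum_nonneg fun i _ => hterm i)
    _ = ∑ i, μ i * c i := by
        simp only [sub_mul, mul_sub, Finset.sum_sub_distrib, ← Finset.mul_sum, hsum, hind]
        ring

section EckartYoung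

variable {n m : ℕ} (M : Matrix (Fin n) (Fin m) ℝ)

def gramEigenvalues : Fin m → ℝ := (isHermitian_conjTranspose_mul_self M).eigenvalues

def gramEigenbasis : Matrix (Fin m) (Fin m) ℝ :=
  (isHermitian_conjTranspose_mul_self M).eigenvectorUnitary

lemma gramEigenbasis_mul_conjTranspose : gramEigenbasis M * (gramEigenbasis M)ᴴ = 1 :=
  mem_unitaryGroup_iff.mp (isHermitian_conjTranspose_mul_self M).eigenvectorUnitary.2

lemma conjTranspose_gramEigenbasis_mul_self : (gramEigenbasis M)ᴴ * gramEigenbasis M = 1 :=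
  mem_unitaryGroup_iff'.mp (isHermitian_conjTranspose_mul_self M).eigenvectorUnitary.2

lemma conjTranspose_gramEigenbasis_mul {s : ℕ} (X : Matrix (Fin m) (Fin s) ℝ) :
    (gramEigenbasis M)ᴴ * (gramEigenbasis M * X) = X := by
  rw [← Matrix.mul_assoc, conjTranspose_gramEigenbasis_mul_self, Matrix.one_mul]

lemma conjTranspose_mul_self_eq_gramEigenbasis :
    Mᴴ * M = gramEigenbasis M * diagonal (gramEigenvalues M) * (gramEigenbasis M)ᴴ :=
  (isHermitian_conjTranspose_mul_self M).spectral_theorem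

def gramEigAsc : Fin m → ℝ := gramEigenvalues M ∘ Tuple.sort (gramEigenvalues M)

-- `∑_{i > k} d_i(M)²`, the sum of the `m - k` smallest eigenvalues of `Mᴴ * M`.
def gramTailSum (k : ℕ) : ℝ :=
  ∑ i ∈ Finset.univ.filter (fun i : Fin m => (i : ℕ) < m - k), gramEigAsc M i

lemma gramEigAsc_monotone : Monotone (gramEigAsc M) := Tuple.monotone_sort _

lemma gramEigAsc_nonneg (i : Fin m) : 0 ≤ gramEigAsc M i :=
  (posSemidef_conjTranspose_mul_self M).eigenvalues_nonneg _

lemma gramTailSum_eq_add_succ {k : ℕ} (hk : k < m) :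
    gramTailSum M k = gramEigAsc M ⟨m - (k + 1), by omega⟩ + gramTailSum M (k + 1) := by
  rw [gramTailSum, gramTailSum, ← Finset.sum_insert (by simp)]
  congr 1
  ext i
  simp only [Finset.mem_filter, Finset.mem_univ, true_and, Finset.mem_insert, Fin.ext_iff]
  omega

lemma gramTailSum_of_le {k : ℕ} (hk : m ≤ k) : gramTailSum M k = 0 :=
  Finset.sum_eq_zero fun i hi => by simp at hi; omega

lemma antitone_gramTailSum_sub_succ :
    Antitone fun k => gramTailSum M k - gramTailSum M (k + 1) := by
  have hdrop : ∀ k, gramTailSum M k - gramTailSum M (k + 1) =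
      if h : k < m then gramEigAsc M ⟨m - (k + 1), by omega⟩ else 0 := by
    intro k
    split_ifs with h
    · rw [gramTailSum_eq_add_succ M h, add_sub_cancel_right]
    · rw [gramTailSum_of_le M (by omega), gramTailSum_of_le M (by omega), sub_zero]
  intro k l hkl
  simp only [hdrop]
  split_ifs with hl hk hk
  · exact gramEigAsc_monotone M (by simp only [Fin.mk_le_mk]; omega)
  · omega
  · exact gramEigAsc_nonneg M _
  · exact le_rfl

lemma frob2_mul_gramEigenbasis_diagonal (g : Fin m → ℝ) :
    frob2 (M * (gramEigenbasis M * diagonal g * (gramEigenbasis M)ᴴ)) =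
      ∑ j, gramEigenvalues M j * g j ^ 2 := by
  rw [frob2_mul_eq_trace, conjTranspose_mul_self_eq_gramEigenbasis, conjTranspose_mul,
    conjTranspose_mul, conjTranspose_conjTranspose, diagonal_conjTranspose, star_trivial]
  simp only [Matrix.mul_assoc, conjTranspose_gramEigenbasis_mul]
  rw [trace_mul_comm]
  simp only [Matrix.mul_assoc, conjTranspose_gramEigenbasis_mul_self, Matrix.mul_one,
    diagonal_mul_diagonal, trace_diagonal]
  exact Finset.sum_congr rfl fun j _ => by ring

lemma exists_rank_le_frob2_sub_eq_gramTailSum (k : ℕ) :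
    ∃ B : Matrix (Fin n) (Fin m) ℝ, B.rank ≤ k ∧ frob2 (M - B) = gramTailSum M k := by
  set U := gramEigenbasis M
  set σ := Tuple.sort (gramEigenvalues M)
  set g : Fin m → ℝ := fun j => if ((σ.symm j : Fin m) : ℕ) < m - k then 1 else 0
  refine ⟨M * (U * diagonal (1 - g) * Uᴴ), ?_, ?_⟩
  · have hcard : (Finset.univ.filter fun i : Fin m => m - k ≤ (i : ℕ)).card ≤ k := by
      have := Finset.card_filter_add_card_filter_not (s := Finset.univ)
        (fun i : Fin m => (i : ℕ) < m - k)
      simp only [Fin.card_filter_val_lt, not_lt, Finset.card_univ, Fintype.card_fin] at this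
      omega
    calc (M * (U * diagonal (1 - g) * Uᴴ)).rank ≤ (U * diagonal (1 - g) * Uᴴ).rank :=
          rank_mul_le_right _ _
      _ ≤ (U * diagonal (1 - g) : Matrix (Fin m) (Fin m) ℝ).rank := rank_mul_le_left _ _
      _ ≤ (diagonal (1 - g)).rank := rank_mul_le_right _ _
      _ = Fintype.card {j // (1 - g) j ≠ 0} := rank_diagonal _
      _ = Fintype.card {i : Fin m // m - k ≤ (i : ℕ)} :=
          Fintype.card_congr <| Equiv.subtypeEquiv σ.symm fun j => by
            simp only [g, Pi.sub_apply, Pi.one_apply]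
            split_ifs <;> simp <;> omega
      _ ≤ k := by rwa [Fintype.card_subtype]
  · have hW : M - M * (U * diagonal (1 - g) * Uᴴ) = M * (U * diagonal g * Uᴴ) := by
      rw [show diagonal (1 - g) = 1 - diagonal g by simp [← diagonal_one, diagonal_sub],
        Matrix.mul_sub, Matrix.sub_mul, Matrix.mul_one, gramEigenbasis_mul_conjTranspose,
        Matrix.mul_sub, Matrix.mul_one, sub_sub_cancel]
    rw [hW, frob2_mul_gramEigenbasis_diagonal, ← Equiv.sum_comp σ, gramTailSum,
      Finset.sum_filter]
    refine Finset.sum_congr rfl fun i _ => ?_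
    simp only [g, gramEigAsc, Function.comp_apply, Equiv.symm_apply_apply]
    split_ifs <;> simp [σ]

lemma sum_gramEigAsc_le_frob2_mul {s : ℕ} (hs : s ≤ m) {V : Matrix (Fin m) (Fin s) ℝ}
    (hV : Vᴴ * V = 1) :
    ∑ i ∈ Finset.univ.filter (fun i : Fin m => (i : ℕ) < s), gramEigAsc M i ≤
      frob2 (M * V) := by
  set G := (gramEigenbasis M)ᴴ * V
  have hVG : V = gramEigenbasis M * G := by
    rw [← Matrix.mul_assoc, gramEigenbasis_mul_conjTranspose, Matrix.one_mul]
  have hG : Gᴴ * G = 1 := by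
    rw [conjTranspose_mul, conjTranspose_conjTranspose, Matrix.mul_assoc,
      ← Matrix.mul_assoc (gramEigenbasis M), gramEigenbasis_mul_conjTranspose, Matrix.one_mul, hV]
  set c : Fin m → ℝ := fun j => (G * Gᴴ) j j
  have hc0 : ∀ j, 0 ≤ c j := fun j => by
    simpa [c, mul_apply] using Finset.sum_nonneg fun i _ => mul_self_nonneg (G j i)
  have hcsum : ∑ j, c j = s := by
    change trace (G * Gᴴ) = s
    rw [trace_mul_comm, hG, trace_one, Fintype.card_fin]
  have hfrob : frob2 (M * V) = ∑ j, gramEigenvalues M j * c j := by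
    rw [frob2_mul_eq_trace, conjTranspose_mul_self_eq_gramEigenbasis, hVG, conjTranspose_mul]
    simp only [Matrix.mul_assoc, conjTranspose_gramEigenbasis_mul]
    rw [trace_mul_comm]
    simp only [Matrix.mul_assoc, conjTranspose_gramEigenbasis_mul_self, Matrix.mul_one]
    simp [trace, diagonal_mul, c]
  set σ := Tuple.sort (gramEigenvalues M)
  rw [hfrob, ← Equiv.sum_comp σ]
  refine sum_filter_lt_le_sum_mul_of_monotone hs (gramEigAsc_monotone M) (gramEigAsc_nonneg M)
    (fun i => hc0 (σ i)) (fun i => diag_mul_conjTranspose_le_one hG (σ i)) ?_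
  rwa [Equiv.sum_comp σ c]

lemma gramTailSum_le_frob2_sub {C : Matrix (Fin n) (Fin m) ℝ} {k : ℕ} (hC : C.rank ≤ k) :
    gramTailSum M k ≤ frob2 (M - C) := by
  obtain ⟨V, hV, hCV⟩ := exists_conjTranspose_mul_eq_one_and_mul_eq_zero C hC
  calc gramTailSum M k ≤ frob2 (M * V) := sum_gramEigAsc_le_frob2_mul M (Nat.sub_le m k) hV
    _ = frob2 ((M - C) * V) := by rw [Matrix.sub_mul, hCV, sub_zero]
    _ ≤ frob2 (M - C) := frob2_mul_le_of_conjTranspose_mul_eq_one _ hV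

lemma eq_zero_of_rank_le_zero {C : Matrix (Fin n) (Fin m) ℝ} (hC : C.rank ≤ 0) : C = 0 := by
  have h : C.rank = 0 := Nat.le_zero.mp hC
  rw [rank, Submodule.finrank_eq_zero, LinearMap.range_eq_bot, ← toLin'_apply',
    ← map_zero toLin'] at h
  exact toLin'.injective h

lemma trunc_spec (k : ℕ) :
    (trunc M k).rank ≤ k ∧
      ∀ C : Matrix (Fin n) (Fin m) ℝ, C.rank ≤ k →
        frob2 (M - trunc M k) ≤ frob2 (M - C) := by
  rcases Nat.eq_zero_or_pos k with rfl | hk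
  · refine ⟨by simp [trunc], fun C hC => ?_⟩
    simp [trunc, eq_zero_of_rank_le_zero hC]
  obtain ⟨B, hBk, hB⟩ := exists_rank_le_frob2_sub_eq_gramTailSum M k
  rw [trunc, if_neg hk.ne']
  exact Classical.epsilon_spec (p := fun B : Matrix (Fin n) (Fin m) ℝ => B.rank ≤ k ∧
      ∀ C : Matrix (Fin n) (Fin m) ℝ, C.rank ≤ k → frob2 (M - B) ≤ frob2 (M - C))
    ⟨B, hBk, fun C hC => hB ▸ gramTailSum_le_frob2_sub M hC⟩

theorem frob2_sub_trunc (k : ℕ) : frob2 (M - trunc M k) = gramTailSum M k := by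
  obtain ⟨B, hBk, hB⟩ := exists_rank_le_frob2_sub_eq_gramTailSum M k
  obtain ⟨hrank, hbest⟩ := trunc_spec M k
  exact le_antisymm (hB ▸ hbest B hBk) (gramTailSum_le_frob2_sub M hrank)

end EckartYoung

section Projection

variable {n m : ℕ} {P : Matrix (Fin n) (Fin n) ℝ}

lemma mul_trunc_of_mul_eq (hP2 : P * P = P) (hPt : Pᵀ = P) {M : Matrix (Fin n) (Fin m) ℝ}
    (hPM : P * M = M) (k : ℕ) : P * trunc M k = trunc M k := by
  obtain ⟨hrank, hbest⟩ := trunc_spec M k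
  set B := trunc M k
  have hPB : M - P * B = P * (M - B) := by rw [Matrix.mul_sub, hPM]
  have hle : frob2 (M - B) ≤ frob2 (P * (M - B)) :=
    hPB ▸ hbest _ ((rank_mul_le_right P B).trans hrank)
  have hperp : frob2 ((M - B) - P * (M - B)) = 0 := by
    have := frob2_eq_frob2_mul_add_frob2_sub_mul hP2 hPt (M - B)
    linarith [frob2_nonneg ((M - B) - P * (M - B))]
  have h := eq_zero_of_frob2_eq_zero hperp
  rwa [← hPB, sub_sub_sub_cancel_left, sub_eq_zero] at h

theorem frob2_sub_trunc_mul (hP2 : P * P = P) (hPt : Pᵀ = P) (Y : Matrix (Fin n) (Fin m) ℝ)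
    (k : ℕ) :
    frob2 (Y - trunc (P * Y) k) = frob2 (Y - P * Y) + gramTailSum (P * Y) k := by
  have hPY : P * (P * Y) = P * Y := by rw [← Matrix.mul_assoc, hP2]
  have hB := mul_trunc_of_mul_eq hP2 hPt hPY k
  rw [frob2_eq_frob2_mul_add_frob2_sub_mul hP2 hPt, Matrix.mul_sub, hB, frob2_sub_trunc,
    sub_sub_sub_cancel_right, add_comm]

end Projection

def penalizedRatio (f : ℕ → ℝ) (N lam : ℝ) (l : ℕ) : ℝ :=
  f l / (N - lam * l)

section PenalizedRatio

variable {f : ℕ → ℝ} {N lam : ℝ}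

lemma penalizedRatio_recurrence {l : ℕ} (hl : 0 < N - lam * l)
    (hl1 : 0 < N - lam * (l + 1 : ℕ)) :
    (N - lam * l) * penalizedRatio f N lam l =
      (N - lam * (l + 1 : ℕ)) * penalizedRatio f N lam (l + 1) + (f l - f (l + 1)) := by
  simp only [penalizedRatio, mul_div_cancel₀ _ hl.ne', mul_div_cancel₀ _ hl1.ne']
  ring

lemma penalizedRatio_succ_le_iff {l : ℕ} (hl : 0 < N - lam * l)
    (hl1 : 0 < N - lam * (l + 1 : ℕ)) :
    penalizedRatio f N lam (l + 1) ≤ penalizedRatio f N lam l ↔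
      lam * penalizedRatio f N lam (l + 1) ≤ f l - f (l + 1) := by
  have hrec := penalizedRatio_recurrence (f := f) hl hl1
  rw [← mul_le_mul_iff_of_pos_left hl]
  push_cast at hrec ⊢
  constructor <;> intro h <;> linarith

lemma penalizedRatio_le_succ_iff {l : ℕ} (hl : 0 < N - lam * l)
    (hl1 : 0 < N - lam * (l + 1 : ℕ)) :
    penalizedRatio f N lam l ≤ penalizedRatio f N lam (l + 1) ↔
      f l - f (l + 1) ≤ lam * penalizedRatio f N lam l := by
  have hrec := penalizedRatio_recurrence (f := f) hl hl1
  rw [← mul_le_mul_iff_of_pos_left hl1]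
  push_cast at hrec ⊢
  constructor <;> intro h <;> linarith

theorem penalizedRatio_succ_le_iff_forall_le (hf : Antitone fun l => f l - f (l + 1))
    {k : ℕ} (hpos : ∀ l ≤ k + 1, 0 < N - lam * l) :
    penalizedRatio f N lam (k + 1) ≤ penalizedRatio f N lam k ↔
      ∀ l ≤ k, penalizedRatio f N lam (k + 1) ≤ penalizedRatio f N lam l := by
  refine ⟨fun h l hl => ?_, fun h => h k le_rfl⟩
  have hdrop := (penalizedRatio_succ_le_iff (hpos k (by omega)) (hpos (k + 1) le_rfl)).1 h
  induction hl using Nat.decreasingInduction with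
  | self => exact h
  | of_succ l hlk ih =>
    have hl := hpos l (by omega)
    have hl1 := hpos (l + 1) (by omega)
    have hrec := penalizedRatio_recurrence (f := f) hl hl1
    have hd : f k - f (k + 1) ≤ f l - f (l + 1) := hf (le_of_lt hlk)
    have hmul := mul_le_mul_of_nonneg_left ih hl1.le
    rw [← mul_le_mul_iff_of_pos_left hl]
    push_cast at hrec hmul ⊢
    linarith

theorem penalizedRatio_le_succ_iff_forall_le (hlam : 0 ≤ lam)
    (hf : Antitone fun l => f l - f (l + 1)) {k K : ℕ} (hkK : k + 1 ≤ K)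
    (hpos : ∀ l ≤ K, 0 < N - lam * l) :
    penalizedRatio f N lam k ≤ penalizedRatio f N lam (k + 1) ↔
      ∀ l, k < l → l ≤ K → penalizedRatio f N lam k ≤ penalizedRatio f N lam l := by
  refine ⟨fun h l hkl hlK => ?_, fun h => h (k + 1) (by omega) hkK⟩
  have hrise := (penalizedRatio_le_succ_iff (hpos k (by omega)) (hpos (k + 1) hkK)).1 h
  induction l, hkl using Nat.le_induction with
  | base => exact h
  | succ l hkl ih =>
    have hprev := ih (by omega)
    refine hprev.trans ((penalizedRatio_le_succ_iff (hpos l (by omega)) (hpos (l + 1) hlK)).2 ?_)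
    calc f l - f (l + 1) ≤ f k - f (k + 1) := hf (by omega)
      _ ≤ lam * penalizedRatio f N lam k := hrise
      _ ≤ lam * penalizedRatio f N lam l := mul_le_mul_of_nonneg_left hprev hlam

end PenalizedRatio

lemma lam_mul_lt_of_le_Kfun {n m q l : ℕ} {lam : ℝ} (hlam : 0 < lam) (hK : 1 ≤ Kfun n m q lam)
    (hl : l ≤ Kfun n m q lam) : lam * l < ((n * m : ℕ) : ℝ) := by
  have hKF : Kfun n m q lam ≤ Nat.floor ((((n * m : ℕ) : ℝ) - 1) / lam) :=
    (min_le_left _ _).trans (min_le_left _ _)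
  have hF : 1 ≤ (((n * m : ℕ) : ℝ) - 1) / lam := Nat.floor_pos.1 (by omega)
  have hlF : (l : ℝ) ≤ (((n * m : ℕ) : ℝ) - 1) / lam :=
    (Nat.cast_le.2 (hl.trans hKF)).trans (Nat.floor_le (by linarith))
  have := mul_le_mul_of_nonneg_left hlF hlam.le
  rw [mul_div_cancel₀ _ hlam.ne'] at this
  linarith

theorem statement_1_general
    {n m q : ℕ}
    (Y : Matrix (Fin n) (Fin m) ℝ)
    (P : Matrix (Fin n) (Fin n) ℝ)
    (hP2 : P * P = P) (hPt : P.transpose = P)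
    (lam : ℝ) (hlam : 0 < lam)
    (k : ℕ) (hk1 : 1 ≤ k) (hkK : k ≤ Kfun n m q lam) :
    (sighat2 Y P lam k ≤ sighat2 Y P lam (k - 1) ↔
      ∀ l ≤ k - 1, sighat2 Y P lam k ≤ sighat2 Y P lam l) ∧
    (sighat2 Y P lam (k - 1) ≤ sighat2 Y P lam k ↔
      ∀ l, k - 1 < l → l ≤ Kfun n m q lam →
        sighat2 Y P lam (k - 1) ≤ sighat2 Y P lam l) := by
  set f : ℕ → ℝ := fun l => frob2 (Y - trunc (P * Y) l)
  have hsighat : sighat2 Y P lam = penalizedRatio f ((n * m : ℕ) : ℝ) lam := rfl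
  have hf : Antitone fun l => f l - f (l + 1) := by
    simpa only [f, frob2_sub_trunc_mul hP2 hPt, add_sub_add_left_eq_sub]
      using antitone_gramTailSum_sub_succ (P * Y)
  have hpos : ∀ l ≤ Kfun n m q lam, 0 < ((n * m : ℕ) : ℝ) - lam * l := fun l hl =>
    sub_pos.2 (lam_mul_lt_of_le_Kfun hlam (hk1.trans hkK) hl)
  obtain ⟨j, rfl⟩ := Nat.exists_eq_add_of_le' hk1
  rw [hsighat, Nat.add_sub_cancel]
  exact ⟨penalizedRatio_succ_le_iff_forall_le hf fun l hl => hpos l (hl.trans hkK),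
    penalizedRatio_le_succ_iff_forall_le hlam.le hf hkK hpos⟩

theorem statement_1
    {n m p q : ℕ}
    (X : Matrix (Fin n) (Fin p) ℝ) (A : Matrix (Fin p) (Fin m) ℝ)
    (E Y : Matrix (Fin n) (Fin m) ℝ)
    (P : Matrix (Fin n) (Fin n) ℝ)
    (hY : Y = X * A + E)
    (hP2 : P * P = P) (hPt : P.transpose = P) (hPX : P * X = X)
    (hq : X.rank = q) (hPq : P.rank = q)
    (lam : ℝ) (hlam : 0 < lam)
    (k : ℕ) (hk1 : 1 ≤ k) (hkK : k ≤ Kfun n m q lam) :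
    (sighat2 Y P lam k ≤ sighat2 Y P lam (k - 1) ↔
      ∀ l ≤ k - 1, sighat2 Y P lam k ≤ sighat2 Y P lam l) ∧
    (sighat2 Y P lam (k - 1) ≤ sighat2 Y P lam k ↔
      ∀ l, k - 1 < l → l ≤ Kfun n m q lam →
        sighat2 Y P lam (k - 1) ≤ sighat2 Y P lam l) :=
  statement_1_general Y P hP2 hPt lam hlam k hk1 hkK

end
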